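/- A polynomial f in ℂ[x_1,...,x_n] is quasisymmetric if and only if s̃_σ(f) = f for all σ in the symmetric group S_n, where s̃_σ denotes Hivert's quasisymmetric action. -/

import Mathlib

/-! Since `s̃ᵢ` is an involution on exponent vectors, `s̃ᵢ f = f` says exactly that the
coefficient of `x^β` does not change when the entries of `β` at `i` and `i + 1` are exchanged
while one of them is zero. Such an exchange turns a strictly increasing index sequence carrying a
composition into another one, which gives one direction. Conversely, sliding the leftmost
misplaced exponent one step to the left, repeatedly, carries `x_{g 1}^{a₁} ⋯ x_{g k}^{a_k}` to
`x_1^{a₁} ⋯ x_k^{a_k}` without changing its coefficient. -/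

open MvPolynomial

/-- Hivert's quasisymmetric swap on exponent vectors: exchange the exponents in
positions `i` and `i+1` if one of them is zero, otherwise do nothing. -/
noncomputable def tswapE (n i : ℕ) (hi : i + 1 < n) (β : Fin n →₀ ℕ) : Fin n →₀ ℕ :=
  if β ⟨i, by omega⟩ = 0 ∨ β ⟨i + 1, hi⟩ = 0 then
    β.equivMapDomain (Equiv.swap (⟨i, by omega⟩ : Fin n) ⟨i + 1, hi⟩)
  else β

/-- Hivert's quasisymmetric action `s̃ᵢ` on polynomials, acting monomial-wise by
`s̃ᵢ(x^β) = x^(s̃ᵢ β)` and extended linearly. -/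
noncomputable def stilde (n i : ℕ) (hi : i + 1 < n) (f : MvPolynomial (Fin n) ℂ) :
    MvPolynomial (Fin n) ℂ :=
  f.support.sum fun β => monomial (tswapE n i hi β) (coeff β f)

/-- Hivert's swap `s̃ᵢ`, extended to all `i : ℕ` (acting as the identity when
`i` is out of range). -/
noncomputable def stilde' (n i : ℕ) (f : MvPolynomial (Fin n) ℂ) : MvPolynomial (Fin n) ℂ :=
  if h : i + 1 < n then stilde n i h f else f

/-- `f` is quasisymmetric: for every strong composition `a = (a₁,…,a_k)` of
positive integers and any two strictly increasing index sequences `g, h`, the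
coefficient of `x_{g 1}^{a₁} ⋯ x_{g k}^{a_k}` in `f` equals that of
`x_{h 1}^{a₁} ⋯ x_{h k}^{a_k}`. -/
def IsQuasisymmetric (n : ℕ) (f : MvPolynomial (Fin n) ℂ) : Prop :=
  ∀ (k : ℕ) (a : Fin k → ℕ), (∀ t, 0 < a t) →
    ∀ g h : Fin k → Fin n, StrictMono g → StrictMono h →
      coeff (∑ t, Finsupp.single (g t) (a t)) f
        = coeff (∑ t, Finsupp.single (h t) (a t)) f

section TSwap

variable {n i : ℕ} (hi : i + 1 < n)

theorem tswapE_involutive : Function.Involutive (tswapE n i hi) := by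
  intro β
  by_cases h : β ⟨i, by omega⟩ = 0 ∨ β ⟨i + 1, hi⟩ = 0
  · have hβ : tswapE n i hi β = β.equivMapDomain (Equiv.swap _ _) := if_pos h
    rw [tswapE, if_pos (by simpa [hβ] using h.symm), hβ]
    ext j
    simp
  · simp only [tswapE, if_neg h]

theorem coeff_stilde (f : MvPolynomial (Fin n) ℂ) (γ : Fin n →₀ ℕ) :
    coeff γ (stilde n i hi f) = coeff (tswapE n i hi γ) f := by
  have hterm : ∀ β, coeff γ (monomial (tswapE n i hi β) (coeff β f))
      = if β = tswapE n i hi γ then coeff β f else 0 := fun β => by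
    simp only [coeff_monomial, (tswapE_involutive hi).eq_iff]
  rw [stilde, coeff_sum, Finset.sum_congr rfl fun β _ => hterm β, Finset.sum_ite_eq']
  split_ifs with h
  · rfl
  · exact (notMem_support_iff.mp h).symm

theorem stilde_eq_self_iff (f : MvPolynomial (Fin n) ℂ) :
    stilde n i hi f = f ↔ ∀ β, coeff (tswapE n i hi β) f = coeff β f := by
  simp only [MvPolynomial.ext_iff, coeff_stilde]

end TSwap

theorem forall_foldr_stilde'_eq_self_iff (n : ℕ) (f : MvPolynomial (Fin n) ℂ) :
    (∀ l : List ℕ, (∀ i ∈ l, i + 1 < n) → l.foldr (fun i acc => stilde' n i acc) f = f) ↔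
      ∀ i (hi : i + 1 < n), stilde n i hi f = f := by
  refine ⟨fun h i hi => ?_, fun h l _ => List.foldr_fixed' (fun i => ?_) l⟩
  · simpa [stilde', hi] using h [i] (by simpa using hi)
  · unfold stilde'
    split_ifs with hi
    exacts [h i hi, rfl]

theorem Fin.val_le_val_of_strictMono {k n : ℕ} {g : Fin k → Fin n} (hg : StrictMono g)
    (t : Fin k) : (t : ℕ) ≤ g t := by
  simpa using Finset.card_le_card_of_injOn g (s := Finset.Iio t) (t := Finset.Iio (g t))
    (fun s hs => by simpa using hg (by simpa using hs)) hg.injective.injOn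

theorem StrictMono.swap_comp {k n : ℕ} {g : Fin k → Fin n} (hg : StrictMono g) {p q : Fin n}
    (hpq : (q : ℕ) = p + 1) (hmiss : (∀ t, g t ≠ p) ∨ ∀ t, g t ≠ q) :
    StrictMono fun t => Equiv.swap p q (g t) := by
  intro s t hst
  have hlt : (g s : ℕ) < g t := hg hst
  have hne : ((g s : ℕ) ≠ p ∧ (g t : ℕ) ≠ p) ∨ ((g s : ℕ) ≠ q ∧ (g t : ℕ) ≠ q) :=
    hmiss.imp (fun h => ⟨Fin.val_ne_of_ne (h s), Fin.val_ne_of_ne (h t)⟩)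
      (fun h => ⟨Fin.val_ne_of_ne (h s), Fin.val_ne_of_ne (h t)⟩)
  show (Equiv.swap p q (g s) : ℕ) < Equiv.swap p q (g t)
  simp only [Equiv.swap_apply_def]
  split_ifs <;> simp only [Fin.ext_iff] at * <;> omega

theorem tswapE_sum_single {k n i : ℕ} (hi : i + 1 < n) (g : Fin k → Fin n) (a : Fin k → ℕ)
    (hmiss : (∀ t, g t ≠ ⟨i, by omega⟩) ∨ ∀ t, g t ≠ ⟨i + 1, hi⟩) :
    tswapE n i hi (∑ t, Finsupp.single (g t) (a t)) =
      ∑ t, Finsupp.single (Equiv.swap ⟨i, by omega⟩ ⟨i + 1, hi⟩ (g t)) (a t) := by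
  have hzero : ∀ j, (∀ t, g t ≠ j) → (∑ t, Finsupp.single (g t) (a t)) j = 0 := fun j hj => by
    simp [Finsupp.finsetSum_apply, hj]
  rw [tswapE, if_pos (hmiss.imp (hzero _) (hzero _))]
  simp [Finsupp.equivMapDomain_eq_mapDomain, Finsupp.mapDomain_finsetSum]

theorem Finsupp.exists_strictMono_sum_single_eq {α M : Type*} [LinearOrder α] [AddCommMonoid M]
    (β : α →₀ M) : ∃ (k : ℕ) (g : Fin k → α), StrictMono g ∧ (∀ t, β (g t) ≠ 0) ∧
      β = ∑ t, Finsupp.single (g t) (β (g t)) := by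
  refine ⟨_, β.support.orderEmbOfFin rfl, (β.support.orderEmbOfFin rfl).strictMono,
    fun t => Finsupp.mem_support_iff.mp (β.support.orderEmbOfFin_mem rfl t), ?_⟩
  conv_lhs => rw [← Finsupp.sum_single β, Finsupp.sum, ← β.support.map_orderEmbOfFin_univ rfl]
  rw [Finset.sum_map]
  rfl

theorem coeff_tswapE_of_isQuasisymmetric {n i : ℕ} {f : MvPolynomial (Fin n) ℂ}
    (hf : IsQuasisymmetric n f) (hi : i + 1 < n) (β : Fin n →₀ ℕ) :
    coeff (tswapE n i hi β) f = coeff β f := by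
  by_cases h : β ⟨i, by omega⟩ = 0 ∨ β ⟨i + 1, hi⟩ = 0
  · obtain ⟨k, g, hg, hβg, hβ⟩ := Finsupp.exists_strictMono_sum_single_eq β
    have hmiss : (∀ t, g t ≠ ⟨i, by omega⟩) ∨ ∀ t, g t ≠ ⟨i + 1, hi⟩ :=
      h.imp (fun h0 t ht => hβg t (ht ▸ h0)) (fun h0 t ht => hβg t (ht ▸ h0))
    have key := hf k _ (fun t => Nat.pos_of_ne_zero (hβg t)) _ g (hg.swap_comp rfl hmiss) hg
    rwa [← tswapE_sum_single hi g _ hmiss, ← hβ] at key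
  · rw [tswapE, if_neg h]

theorem apply_sum_single_eq_castLE {α : Type*} {n k : ℕ} {c : (Fin n →₀ ℕ) → α}
    (hc : ∀ i (hi : i + 1 < n) β, c (tswapE n i hi β) = c β) (hkn : k ≤ n) (a : Fin k → ℕ)
    {g : Fin k → Fin n} (hg : StrictMono g) :
    c (∑ t, Finsupp.single (g t) (a t)) = c (∑ t, Finsupp.single (Fin.castLE hkn t) (a t)) := by
  induction hs : ∑ t, (g t : ℕ) using Nat.strong_induction_on generalizing g with
  | _ s ih =>
  by_cases hpacked : ∀ t, (g t : ℕ) ≤ t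
  · have : g = Fin.castLE hkn :=
      funext fun t => Fin.ext (le_antisymm (hpacked t) (Fin.val_le_val_of_strictMono hg t))
    rw [this]
  push Not at hpacked
  -- The leftmost `t₀` with `t₀ < g t₀` has the slot `g t₀ - 1` just below it free.
  obtain ⟨t₀, ht₀, hmin⟩ := wellFounded_lt.has_min {t : Fin k | (t : ℕ) < g t} hpacked
  set i := (g t₀ : ℕ) - 1
  have hi : i + 1 < n := by omega
  have ht₀ : (t₀ : ℕ) < g t₀ := ht₀
  have hq : g t₀ = ⟨i + 1, hi⟩ := Fin.ext (by simp only [i]; omega)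
  have hmiss : ∀ t, g t ≠ ⟨i, by omega⟩ := by
    intro t ht
    have hlt : t < t₀ := hg.lt_iff_lt.mp (by rw [ht, hq]; exact Fin.mk_lt_mk.mpr i.lt_succ_self)
    have hle : (g t : ℕ) ≤ t := not_lt.mp fun h => hmin t h hlt
    have hgt : (g t : ℕ) = i := congrArg Fin.val ht
    have : (t : ℕ) < t₀ := hlt
    omega
  have hdecr : ∑ t, ((Equiv.swap (⟨i, by omega⟩ : Fin n) ⟨i + 1, hi⟩ (g t) : Fin n) : ℕ) < s := by
    rw [← hs]
    refine Finset.sum_lt_sum (fun t _ => ?_) ⟨t₀, Finset.mem_univ _, by simp [hq]⟩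
    by_cases ht : g t = ⟨i + 1, hi⟩
    · simp [ht]
    · rw [Equiv.swap_apply_of_ne_of_ne (hmiss t) ht]
  rw [← hc i hi, tswapE_sum_single hi g a (Or.inl hmiss)]
  exact ih _ hdecr (hg.swap_comp rfl (Or.inl hmiss)) rfl

theorem isQuasisymmetric_of_coeff_tswapE {n : ℕ} {f : MvPolynomial (Fin n) ℂ}
    (hf : ∀ i (hi : i + 1 < n) β, coeff (tswapE n i hi β) f = coeff β f) :
    IsQuasisymmetric n f := by
  intro k a _ g h hg hh
  have hkn := Fin.le_of_injective g hg.injective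
  rw [apply_sum_single_eq_castLE (c := fun β => coeff β f) hf hkn a hg,
    apply_sum_single_eq_castLE (c := fun β => coeff β f) hf hkn a hh]

/-- A polynomial `f ∈ ℂ[x₁,…,xₙ]` is quasisymmetric if and only if
`s̃_σ f = f` for every `σ ∈ Sₙ`, where Hivert's action of `σ` is obtained by
applying the generators `s̃ᵢ` along any word for `σ`; equivalently, `f` is fixed
by every finite composite of the generators `s̃ᵢ`. -/
theorem isQuasisymmetric_iff_hivert_invariant (n : ℕ) (f : MvPolynomial (Fin n) ℂ) :
    IsQuasisymmetric n f ↔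
      ∀ l : List ℕ, (∀ i ∈ l, i + 1 < n) →
        l.foldr (fun i acc => stilde' n i acc) f = f := by
  rw [forall_foldr_stilde'_eq_self_iff]
  simp only [stilde_eq_self_iff]
  exact ⟨fun hf _ hi => coeff_tswapE_of_isQuasisymmetric hf hi, isQuasisymmetric_of_coeff_tswapE⟩
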